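/- Rotation preserving observed loadings (IO can be imposed without loss of generality): let f_t = (g_t', h_t')' ∈ R^{r_1+r_2} for t=1,…,T with positive definite sample covariance M_{ff}, let Γ be an m×(r_1+r_2) loading matrix whose y-equation rows are λ_i = (ψ_i', φ_i')' with the φ_i block OBSERVED, and let Σ be m×m symmetric positive definite; assume the relevant symmetric matrix below has distinct eigenvalues. Then there exists an invertible (r_1+r_2)×(r_1+r_2) matrix A such that, setting Γ^⋆ = Γ A^{-1} and f_t^⋆ = A(f_t − f̄) with blocks (g_t^⋆, h_t^⋆), one has: (i) Γ f_t = Γ f̄ + Γ^⋆ f_t^⋆; (ii) the observed loading block Φ is left unchanged by the transformation; (iii) T^{-1}Σ_t g_t^⋆ = 0, T^{-1}Σ_t h_t^⋆ = 0, T^{-1}Σ_t g_t^⋆ g_t^{⋆'} = I_{r_1}, and T^{-1}Σ_t g_t^⋆ h_t^{⋆'} = 0; and (iv) m^{-1}Γ^{g⋆'}Σ^{-1}Γ^{g⋆} is diagonal with distinct descending diagonal entries. -/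

import Mathlib

/-!
STATEMENT 15: Rotation preserving observed loadings (IO can be imposed without loss
of generality).  For factors f_t = (g_t', h_t')' ∈ ℝ^{r₁+r₂} with positive definite
sample covariance and an m×(r₁+r₂) loading matrix Γ whose h-columns contain the
OBSERVED loadings, there is an invertible A such that Γ⋆ = Γ A⁻¹ and
f⋆_t = A(f_t − f̄) satisfy: (i) Γ f_t = Γ f̄ + Γ⋆ f⋆_t; (ii) the observed h-loading
block is left unchanged; (iii) the transformed g- and h-factors have zero sample
means, the g-factors have identity sample covariance and zero sample covariance with
the h-factors; (iv) m⁻¹Γ^{g⋆}'Σ⁻¹Γ^{g⋆} is diagonal with distinct descending entries.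
The genericity assumption is expressed as the existence of a spectral decomposition
with strictly descending eigenvalues for the explicit matrix arising in the
construction.
-/

open Matrix BigOperators

noncomputable section

/-- Sample mean of the factors. -/
def fbar {T r : ℕ} (f : Fin T → Fin r → ℝ) : Fin r → ℝ :=
  (T : ℝ)⁻¹ • ∑ t, f t

/-- Sample covariance matrix `M_ff` of the factors. -/
def Mff {T r : ℕ} (f : Fin T → Fin r → ℝ) : Matrix (Fin r) (Fin r) ℝ :=
  (T : ℝ)⁻¹ • ∑ t, Matrix.of fun a b => (f t a - fbar f a) * (f t b - fbar f b)

/-- Diagonal with distinct diagonal entries arranged in descending order. -/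
def DiagDistinctDesc {n : ℕ} (A : Matrix (Fin n) (Fin n) ℝ) : Prop :=
  ∃ d : Fin n → ℝ, (∀ a b : Fin n, a < b → d b < d a) ∧ A = Matrix.diagonal d

/-- Spectral decomposition with strictly descending (hence distinct) eigenvalues;
for a symmetric matrix this says exactly that all eigenvalues are distinct. -/
def HasDistinctEigen {n : ℕ} (A : Matrix (Fin n) (Fin n) ℝ) : Prop :=
  ∃ (U : Matrix (Fin n) (Fin n) ℝ) (d : Fin n → ℝ),
    U * Uᵀ = 1 ∧ Uᵀ * U = 1 ∧ (∀ a b : Fin n, a < b → d b < d a) ∧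
    A = U * Matrix.diagonal d * Uᵀ

/-- The positive semidefinite square root of a positive semidefinite matrix
(the former `Matrix.PosSemidef.sqrt`, removed from Mathlib). -/
def posSemidefSqrt {n : Type*} [Fintype n] [DecidableEq n]
    {A : Matrix n n ℝ} (hA : A.PosSemidef) : Matrix n n ℝ :=
  hA.1.eigenvectorUnitary.1 * diagonal (fun i => (hA.1.eigenvalues i).sqrt) *
  (star hA.1.eigenvectorUnitary : Matrix n n ℝ)

section

variable {T r₁ r₂ : ℕ} (f : Fin T → Fin (r₁ + r₂) → ℝ)

/-- `M_gg` block of the sample covariance. -/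
def Mgg : Matrix (Fin r₁) (Fin r₁) ℝ :=
  (Mff f).submatrix (Fin.castAdd r₂) (Fin.castAdd r₂)

/-- `M_hg` block of the sample covariance. -/
def Mhg : Matrix (Fin r₂) (Fin r₁) ℝ :=
  (Mff f).submatrix (Fin.natAdd r₁) (Fin.castAdd r₂)

end

/-
Let `S = M_gg^{1/2}` and let `U` be the orthogonal matrix diagonalising the matrix `X` of `hg`.
Take the block lower-triangular `A = [[Uᵀ S⁻¹, 0], [-M_hg M_gg⁻¹, 1]]`. Its identity block keeps the
h-loadings of `Γ A⁻¹` equal to those of `Γ`; congruence by `A` is block Gaussian elimination of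
`M_ff`, which whitens the g-block and clears the g–h covariance; and the new g-loadings are
`(Γ^g S + Γ^h M_hg S⁻¹) U`, so the matrix in (iv) is `Uᵀ X U`, which is diagonal.
-/

section SampleMoments

variable {T r : ℕ} (f : Fin T → Fin r → ℝ)

lemma sum_sub_fbar : ∑ t, (f t - fbar f) = 0 := by
  rcases Nat.eq_zero_or_pos T with rfl | hT
  · simp
  · rw [Finset.sum_sub_distrib, fbar, Finset.sum_const, Finset.card_univ, Fintype.card_fin,
      ← Nat.cast_smul_eq_nsmul ℝ, smul_smul, mul_inv_cancel₀ (by positivity), one_smul, sub_self]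

lemma sum_mulVec_sub_fbar_comp {k l : Type*} (A : Matrix k (Fin r) ℝ) (u : l → k) :
    ∑ t, (fun a => (A *ᵥ (f t - fbar f)) (u a)) = 0 := by
  funext a
  rw [Finset.sum_apply, ← Finset.sum_apply (u a), ← mulVec_sum, sum_sub_fbar, mulVec_zero]
  rfl

lemma Mff_transpose : (Mff f)ᵀ = Mff f := by
  ext a b
  simp [Mff, Matrix.sum_apply, mul_comm]

lemma smul_sum_vecMulVec_mulVec_sub_fbar {k : Type*} (A : Matrix k (Fin r) ℝ) :
    (T : ℝ)⁻¹ • ∑ t, vecMulVec (A *ᵥ (f t - fbar f)) (A *ᵥ (f t - fbar f)) = A * Mff f * Aᵀ := by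
  have hMff : Mff f = (T : ℝ)⁻¹ • ∑ t, vecMulVec (f t - fbar f) (f t - fbar f) := rfl
  simp only [hMff, Matrix.mul_smul, Matrix.smul_mul, Matrix.mul_sum, Matrix.sum_mul,
    mul_vecMulVec, vecMulVec_mul, vecMul_transpose]

lemma smul_sum_mulVec_sub_fbar_mul_eq_submatrix {k l l' : Type*} (A : Matrix k (Fin r) ℝ)
    (u : l → k) (v : l' → k) :
    (T : ℝ)⁻¹ • ∑ t, of (fun a b => (A *ᵥ (f t - fbar f)) (u a) * (A *ᵥ (f t - fbar f)) (v b)) =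
      (A * Mff f * Aᵀ).submatrix u v := by
  rw [← smul_sum_vecMulVec_mulVec_sub_fbar]
  ext
  simp [Matrix.sum_apply, vecMulVec_apply]

end SampleMoments

section FinBlocks

variable {α : Type*} {n₁ n₂ c₁ c₂ : ℕ}

def finBlocks (A : Matrix (Fin n₁) (Fin c₁) α) (B : Matrix (Fin n₁) (Fin c₂) α)
    (C : Matrix (Fin n₂) (Fin c₁) α) (D : Matrix (Fin n₂) (Fin c₂) α) :
    Matrix (Fin (n₁ + n₂)) (Fin (c₁ + c₂)) α :=
  reindex finSumFinEquiv finSumFinEquiv (fromBlocks A B C D)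

variable (A : Matrix (Fin n₁) (Fin c₁) α) (B : Matrix (Fin n₁) (Fin c₂) α)
  (C : Matrix (Fin n₂) (Fin c₁) α) (D : Matrix (Fin n₂) (Fin c₂) α)

@[simp]
lemma finBlocks_submatrix_castAdd_castAdd :
    (finBlocks A B C D).submatrix (Fin.castAdd n₂) (Fin.castAdd c₂) = A := by
  ext; simp [finBlocks]

@[simp]
lemma finBlocks_submatrix_castAdd_natAdd :
    (finBlocks A B C D).submatrix (Fin.castAdd n₂) (Fin.natAdd c₁) = B := by
  ext; simp [finBlocks]

@[simp]
lemma finBlocks_apply_castAdd_castAdd (i : Fin n₁) (j : Fin c₁) :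
    finBlocks A B C D (Fin.castAdd n₂ i) (Fin.castAdd c₂ j) = A i j := by
  simp [finBlocks]

@[simp]
lemma finBlocks_apply_castAdd_natAdd (i : Fin n₁) (j : Fin c₂) :
    finBlocks A B C D (Fin.castAdd n₂ i) (Fin.natAdd c₁ j) = B i j := by
  simp [finBlocks]

@[simp]
lemma finBlocks_apply_natAdd_castAdd (i : Fin n₂) (j : Fin c₁) :
    finBlocks A B C D (Fin.natAdd n₁ i) (Fin.castAdd c₂ j) = C i j := by
  simp [finBlocks]

@[simp]
lemma finBlocks_apply_natAdd_natAdd (i : Fin n₂) (j : Fin c₂) :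
    finBlocks A B C D (Fin.natAdd n₁ i) (Fin.natAdd c₁ j) = D i j := by
  simp [finBlocks]

lemma finBlocks_transpose : (finBlocks A B C D)ᵀ = finBlocks Aᵀ Cᵀ Bᵀ Dᵀ := by
  rw [finBlocks, transpose_reindex, fromBlocks_transpose, finBlocks]

lemma eq_finBlocks (M : Matrix (Fin (n₁ + n₂)) (Fin (c₁ + c₂)) α) :
    M = finBlocks (M.submatrix (Fin.castAdd n₂) (Fin.castAdd c₂))
      (M.submatrix (Fin.castAdd n₂) (Fin.natAdd c₁))
      (M.submatrix (Fin.natAdd n₁) (Fin.castAdd c₂))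
      (M.submatrix (Fin.natAdd n₁) (Fin.natAdd c₁)) := by
  ext i j
  induction i using Fin.addCases <;> induction j using Fin.addCases <;> simp

lemma finBlocks_one [Zero α] [One α] :
    finBlocks (1 : Matrix (Fin n₁) (Fin n₁) α) 0 0 (1 : Matrix (Fin n₂) (Fin n₂) α) = 1 := by
  rw [finBlocks, fromBlocks_one, reindex_apply, submatrix_one_equiv]

variable [NonUnitalNonAssocSemiring α]

lemma finBlocks_mul_finBlocks {d₁ d₂ : ℕ} (A' : Matrix (Fin c₁) (Fin d₁) α)
    (B' : Matrix (Fin c₁) (Fin d₂) α) (C' : Matrix (Fin c₂) (Fin d₁) α)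
    (D' : Matrix (Fin c₂) (Fin d₂) α) :
    finBlocks A B C D * finBlocks A' B' C' D' =
      finBlocks (A * A' + B * C') (A * B' + B * D') (C * A' + D * C') (C * B' + D * D') := by
  simp only [finBlocks, reindex_apply, submatrix_mul_equiv, fromBlocks_multiply]

lemma mul_finBlocks_submatrix_castAdd {l : Type*} (X : Matrix l (Fin (n₁ + n₂)) α) :
    (X * finBlocks A B C D).submatrix id (Fin.castAdd c₂) =
      X.submatrix id (Fin.castAdd n₂) * A + X.submatrix id (Fin.natAdd n₁) * C := by
  ext i j
  simp [mul_apply, Fin.sum_univ_add]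

lemma mul_finBlocks_submatrix_natAdd {l : Type*} (X : Matrix l (Fin (n₁ + n₂)) α) :
    (X * finBlocks A B C D).submatrix id (Fin.natAdd c₁) =
      X.submatrix id (Fin.castAdd n₂) * B + X.submatrix id (Fin.natAdd n₁) * D := by
  ext i j
  simp [mul_apply, Fin.sum_univ_add]

end FinBlocks

section BlockElimination

variable {K : Type*} [Field K] {n₁ n₂ : ℕ}

lemma finBlocks_lowerTri_mul_inverse {P P' : Matrix (Fin n₁) (Fin n₁) K} (hP : P * P' = 1)
    (Q : Matrix (Fin n₂) (Fin n₁) K) :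
    finBlocks P 0 (-Q) (1 : Matrix (Fin n₂) (Fin n₂) K) *
      finBlocks P' 0 (Q * P') (1 : Matrix (Fin n₂) (Fin n₂) K) = 1 := by
  rw [finBlocks_mul_finBlocks, ← finBlocks_one]
  congr 1 <;> simp [hP]

lemma finBlocks_elim_mul_mul_transpose (P : Matrix (Fin n₁) (Fin n₁) K)
    {G : Matrix (Fin n₁) (Fin n₁) K} (hGt : Gᵀ = G) (hG : IsUnit G.det)
    (H : Matrix (Fin n₂) (Fin n₁) K) (D : Matrix (Fin n₂) (Fin n₂) K) :
    finBlocks P 0 (-(H * G⁻¹)) (1 : Matrix (Fin n₂) (Fin n₂) K) * finBlocks G Hᵀ H D *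
        (finBlocks P 0 (-(H * G⁻¹)) 1)ᵀ =
      finBlocks (P * G * Pᵀ) 0 0 (D - H * G⁻¹ * Hᵀ) := by
  have hHG : -(H * G⁻¹) * G + H = 0 := by
    rw [Matrix.neg_mul, Matrix.mul_assoc, nonsing_inv_mul _ hG, Matrix.mul_one, neg_add_cancel]
  have hGinvt : (G⁻¹)ᵀ = G⁻¹ := by rw [transpose_nonsing_inv, hGt]
  rw [finBlocks_transpose, finBlocks_mul_finBlocks, finBlocks_mul_finBlocks]
  simp only [Matrix.zero_mul, add_zero, Matrix.one_mul, Matrix.transpose_zero, Matrix.mul_zero,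
    Matrix.transpose_one, Matrix.mul_one, hHG, Matrix.transpose_neg, Matrix.transpose_mul, hGinvt]
  congr 1
  · rw [Matrix.mul_neg, Matrix.mul_assoc, ← Matrix.mul_assoc G, mul_nonsing_inv _ hG,
      Matrix.one_mul, neg_add_cancel]
  · rw [zero_add, Matrix.neg_mul, sub_eq_neg_add]

end BlockElimination

lemma Mff_eq_finBlocks {T r₁ r₂ : ℕ} (f : Fin T → Fin (r₁ + r₂) → ℝ) :
    Mff f = finBlocks (Mgg f) (Mhg f)ᵀ (Mhg f)
      ((Mff f).submatrix (Fin.natAdd r₁) (Fin.natAdd r₁)) := by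
  conv_lhs => rw [eq_finBlocks (Mff f)]
  rw [Mhg, transpose_submatrix, Mff_transpose, Mgg]

lemma Mgg_transpose {T r₁ r₂ : ℕ} (f : Fin T → Fin (r₁ + r₂) → ℝ) : (Mgg f)ᵀ = Mgg f := by
  rw [Mgg, transpose_submatrix, Mff_transpose]

lemma mulVec_eq_add_mul_inv_mulVec_sub {R k n : Type*} [CommRing R] [Fintype n] [DecidableEq n]
    {A : Matrix n n R} (hA : IsUnit A.det) (Γ : Matrix k n R) (x c : n → R) :
    Γ *ᵥ x = Γ *ᵥ c + (Γ * A⁻¹) *ᵥ (A *ᵥ (x - c)) := by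
  rw [mulVec_mulVec, Matrix.mul_assoc, nonsing_inv_mul _ hA, Matrix.mul_one, ← mulVec_add,
    add_sub_cancel]

lemma HasDistinctEigen.exists_diagDistinctDesc {n : ℕ} {A : Matrix (Fin n) (Fin n) ℝ}
    (h : HasDistinctEigen A) : ∃ U : Matrix (Fin n) (Fin n) ℝ, Uᵀ * U = 1 ∧
      DiagDistinctDesc (Uᵀ * A * U) := by
  obtain ⟨U, d, -, hUtU, hd, rfl⟩ := h
  refine ⟨U, hUtU, d, hd, ?_⟩
  simp only [← Matrix.mul_assoc, hUtU, Matrix.one_mul]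
  rw [Matrix.mul_assoc, hUtU, Matrix.mul_one]

section PosSemidefSqrt

variable {n : Type*} [Fintype n] [DecidableEq n]

lemma posSemidefSqrt_mul_self {A : Matrix n n ℝ} (hA : A.PosSemidef) :
    posSemidefSqrt hA * posSemidefSqrt hA = A := by
  set V : Matrix n n ℝ := hA.1.eigenvectorUnitary.1
  have hVV : (star hA.1.eigenvectorUnitary : Matrix n n ℝ) * V = 1 :=
    Unitary.coe_star_mul_self _
  conv_rhs => rw [hA.1.spectral_theorem, Unitary.conjStarAlgAut_apply]
  calc posSemidefSqrt hA * posSemidefSqrt hA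
      = V * (diagonal (fun i => (hA.1.eigenvalues i).sqrt) *
          ((star hA.1.eigenvectorUnitary : Matrix n n ℝ) * V) *
          diagonal (fun i => (hA.1.eigenvalues i).sqrt)) *
          (star hA.1.eigenvectorUnitary : Matrix n n ℝ) := by
        simp only [posSemidefSqrt, V, Matrix.mul_assoc]
    _ = _ := by
      rw [hVV, Matrix.mul_one, diagonal_mul_diagonal]
      congr 3
      funext i
      simp [Real.mul_self_sqrt (hA.eigenvalues_nonneg i)]

lemma posSemidefSqrt_transpose {A : Matrix n n ℝ} (hA : A.PosSemidef) :
    (posSemidefSqrt hA)ᵀ = posSemidefSqrt hA := by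
  simp [posSemidefSqrt, Matrix.transpose_mul, Matrix.star_eq_conjTranspose,
    Matrix.conjTranspose_eq_transpose_of_trivial, Matrix.mul_assoc]

lemma Matrix.PosDef.isUnit_det_posSemidefSqrt {A : Matrix n n ℝ} (hA : A.PosDef) :
    IsUnit (posSemidefSqrt hA.posSemidef).det := by
  have h := hA.det_pos.ne'.isUnit
  rw [← posSemidefSqrt_mul_self hA.posSemidef, det_mul] at h
  exact isUnit_of_mul_isUnit_left h

end PosSemidefSqrt

section SquareRoot

variable {R n : Type*} [CommRing R] [Fintype n] [DecidableEq n] {S A : Matrix n n R}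

lemma mul_inv_mul_mul_transpose_eq_one_of_mul_self_eq (hSA : S * S = A) (hSt : Sᵀ = S)
    (hS : IsUnit S.det) {U : Matrix n n R} (hU : Uᵀ * U = 1) :
    Uᵀ * S⁻¹ * A * (Uᵀ * S⁻¹)ᵀ = 1 := by
  rw [transpose_mul, transpose_transpose, transpose_nonsing_inv, hSt, ← hSA]
  calc _ = Uᵀ * ((S⁻¹ * S) * (S * S⁻¹)) * U := by simp only [Matrix.mul_assoc]
    _ = 1 := by rw [nonsing_inv_mul _ hS, mul_nonsing_inv _ hS, Matrix.one_mul, Matrix.mul_one, hU]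

lemma inv_mul_eq_inv_of_mul_self_eq (hSA : S * S = A) (hS : IsUnit S.det) : A⁻¹ * S = S⁻¹ := by
  rw [← hSA, Matrix.mul_inv_rev, Matrix.mul_assoc, nonsing_inv_mul _ hS, Matrix.mul_one]

end SquareRoot

theorem stmt15_general {T m r₁ r₂ : ℕ} (f : Fin T → Fin (r₁ + r₂) → ℝ)
    (Γ : Matrix (Fin m) (Fin (r₁ + r₂)) ℝ) (Sg : Matrix (Fin m) (Fin m) ℝ)
    (hMgg : (Mgg f).PosDef)
    -- genericity: the matrix to be diagonalized in the construction has distinct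
    -- eigenvalues, where `Γ^{g(0)} = Γ^g M_gg^{1/2} + Γ^h M_hg M_gg^{-1/2}`
    (hg : HasDistinctEigen ((m : ℝ)⁻¹ •
      (Γ.submatrix id (Fin.castAdd r₂) * posSemidefSqrt hMgg.posSemidef +
        Γ.submatrix id (Fin.natAdd r₁) * Mhg f * (posSemidefSqrt hMgg.posSemidef)⁻¹)ᵀ * Sg⁻¹ *
      (Γ.submatrix id (Fin.castAdd r₂) * posSemidefSqrt hMgg.posSemidef +
        Γ.submatrix id (Fin.natAdd r₁) * Mhg f * (posSemidefSqrt hMgg.posSemidef)⁻¹))) :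
    ∃ A : Matrix (Fin (r₁ + r₂)) (Fin (r₁ + r₂)) ℝ, IsUnit A.det ∧
      -- (i) the common component is unchanged
      (∀ t, Γ.mulVec (f t) =
        Γ.mulVec (fbar f) + (Γ * A⁻¹).mulVec (A.mulVec (f t - fbar f))) ∧
      -- (ii) the observed h-loading block (in particular Φ) is untransformed
      (∀ (i : Fin m) (a : Fin r₂),
        (Γ * A⁻¹) i (Fin.natAdd r₁ a) = Γ i (Fin.natAdd r₁ a)) ∧
      -- (iii) zero sample means, identity sample covariance of g⋆,
      -- and zero sample cross-covariance of g⋆ with h⋆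
      (∑ t, (fun a : Fin r₁ => A.mulVec (f t - fbar f) (Fin.castAdd r₂ a))) = 0 ∧
      (∑ t, (fun a : Fin r₂ => A.mulVec (f t - fbar f) (Fin.natAdd r₁ a))) = 0 ∧
      ((T : ℝ)⁻¹ • ∑ t, Matrix.of (fun a b : Fin r₁ =>
          A.mulVec (f t - fbar f) (Fin.castAdd r₂ a) *
          A.mulVec (f t - fbar f) (Fin.castAdd r₂ b))
        = (1 : Matrix (Fin r₁) (Fin r₁) ℝ)) ∧
      ((T : ℝ)⁻¹ • ∑ t, Matrix.of (fun (a : Fin r₁) (b : Fin r₂) =>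
          A.mulVec (f t - fbar f) (Fin.castAdd r₂ a) *
          A.mulVec (f t - fbar f) (Fin.natAdd r₁ b))
        = (0 : Matrix (Fin r₁) (Fin r₂) ℝ)) ∧
      -- (iv) the IO diagonality normalization for the new g-loadings
      DiagDistinctDesc ((m : ℝ)⁻¹ •
        ((Γ * A⁻¹).submatrix id (Fin.castAdd r₂))ᵀ * Sg⁻¹ *
          ((Γ * A⁻¹).submatrix id (Fin.castAdd r₂))) := by
  obtain ⟨U, hUtU, hdiag⟩ := hg.exists_diagDistinctDesc
  set S := posSemidefSqrt hMgg.posSemidef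
  have hS : IsUnit S.det := hMgg.isUnit_det_posSemidefSqrt
  have hSS : S * S = Mgg f := posSemidefSqrt_mul_self hMgg.posSemidef
  set A := finBlocks (Uᵀ * S⁻¹) 0 (-(Mhg f * (Mgg f)⁻¹)) (1 : Matrix (Fin r₂) (Fin r₂) ℝ)
    with hAdef
  have hAA' : A * finBlocks (S * U) 0 (Mhg f * (Mgg f)⁻¹ * (S * U)) 1 = 1 :=
    finBlocks_lowerTri_mul_inverse (by
      rw [Matrix.mul_assoc, ← Matrix.mul_assoc S⁻¹, nonsing_inv_mul _ hS, Matrix.one_mul, hUtU]) _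
  have hA : IsUnit A.det := isUnit_det_of_right_inverse hAA'
  have hAinv := inv_eq_right_inv hAA'
  obtain ⟨D, hcov⟩ : ∃ D : Matrix (Fin r₂) (Fin r₂) ℝ, A * Mff f * Aᵀ = finBlocks 1 0 0 D := by
    rw [hAdef, Mff_eq_finBlocks, finBlocks_elim_mul_mul_transpose _ (Mgg_transpose f)
      hMgg.det_pos.ne'.isUnit, mul_inv_mul_mul_transpose_eq_one_of_mul_self_eq hSS
      (posSemidefSqrt_transpose _) hS hUtU]
    exact ⟨_, rfl⟩
  have hcols : (Γ * A⁻¹).submatrix id (Fin.castAdd r₂) = (Γ.submatrix id (Fin.castAdd r₂) * S +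
      Γ.submatrix id (Fin.natAdd r₁) * Mhg f * S⁻¹) * U := by
    rw [hAinv, mul_finBlocks_submatrix_castAdd, Matrix.add_mul]
    simp only [Matrix.mul_assoc]
    rw [← Matrix.mul_assoc (Mgg f)⁻¹, inv_mul_eq_inv_of_mul_self_eq hSS hS]
  refine ⟨A, hA, fun t => mulVec_eq_add_mul_inv_mulVec_sub hA Γ _ _, fun i a => ?_,
    sum_mulVec_sub_fbar_comp f A _, sum_mulVec_sub_fbar_comp f A _, ?_, ?_, ?_⟩
  · simpa [hAinv] using congrFun₂ (mul_finBlocks_submatrix_natAdd (S * U) 0 _ 1 Γ) i a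
  · simp [smul_sum_mulVec_sub_fbar_mul_eq_submatrix, hcov]
  · simp [smul_sum_mulVec_sub_fbar_mul_eq_submatrix, hcov]
  · rw [hcols]
    convert hdiag using 1
    simp only [transpose_mul, Matrix.smul_mul, Matrix.mul_smul, Matrix.mul_assoc]

theorem stmt15 {T m r₁ r₂ : ℕ} (f : Fin T → Fin (r₁ + r₂) → ℝ)
    (Γ : Matrix (Fin m) (Fin (r₁ + r₂)) ℝ) (Sg : Matrix (Fin m) (Fin m) ℝ)
    (hSg : Sg.PosDef) (hM : (Mff f).PosDef) (hMgg : (Mgg f).PosDef)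
    -- genericity: the matrix to be diagonalized in the construction has distinct
    -- eigenvalues, where `Γ^{g(0)} = Γ^g M_gg^{1/2} + Γ^h M_hg M_gg^{-1/2}`
    (hg : HasDistinctEigen ((m : ℝ)⁻¹ •
      (Γ.submatrix id (Fin.castAdd r₂) * posSemidefSqrt hMgg.posSemidef +
        Γ.submatrix id (Fin.natAdd r₁) * Mhg f * (posSemidefSqrt hMgg.posSemidef)⁻¹)ᵀ * Sg⁻¹ *
      (Γ.submatrix id (Fin.castAdd r₂) * posSemidefSqrt hMgg.posSemidef +
        Γ.submatrix id (Fin.natAdd r₁) * Mhg f * (posSemidefSqrt hMgg.posSemidef)⁻¹))) :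
    ∃ A : Matrix (Fin (r₁ + r₂)) (Fin (r₁ + r₂)) ℝ, IsUnit A.det ∧
      -- (i) the common component is unchanged
      (∀ t, Γ.mulVec (f t) =
        Γ.mulVec (fbar f) + (Γ * A⁻¹).mulVec (A.mulVec (f t - fbar f))) ∧
      -- (ii) the observed h-loading block (in particular Φ) is untransformed
      (∀ (i : Fin m) (a : Fin r₂),
        (Γ * A⁻¹) i (Fin.natAdd r₁ a) = Γ i (Fin.natAdd r₁ a)) ∧
      -- (iii) zero sample means, identity sample covariance of g⋆,
      -- and zero sample cross-covariance of g⋆ with h⋆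
      (∑ t, (fun a : Fin r₁ => A.mulVec (f t - fbar f) (Fin.castAdd r₂ a))) = 0 ∧
      (∑ t, (fun a : Fin r₂ => A.mulVec (f t - fbar f) (Fin.natAdd r₁ a))) = 0 ∧
      ((T : ℝ)⁻¹ • ∑ t, Matrix.of (fun a b : Fin r₁ =>
          A.mulVec (f t - fbar f) (Fin.castAdd r₂ a) *
          A.mulVec (f t - fbar f) (Fin.castAdd r₂ b))
        = (1 : Matrix (Fin r₁) (Fin r₁) ℝ)) ∧
      ((T : ℝ)⁻¹ • ∑ t, Matrix.of (fun (a : Fin r₁) (b : Fin r₂) =>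
          A.mulVec (f t - fbar f) (Fin.castAdd r₂ a) *
          A.mulVec (f t - fbar f) (Fin.natAdd r₁ b))
        = (0 : Matrix (Fin r₁) (Fin r₂) ℝ)) ∧
      -- (iv) the IO diagonality normalization for the new g-loadings
      DiagDistinctDesc ((m : ℝ)⁻¹ •
        ((Γ * A⁻¹).submatrix id (Fin.castAdd r₂))ᵀ * Sg⁻¹ *
          ((Γ * A⁻¹).submatrix id (Fin.castAdd r₂))) :=
  stmt15_general f Γ Sg hMgg hg
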